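/- arXiv:2110.07469 — 2 statements merged into one kernel-verified Lean document; each statement's English description precedes it below -/
import Mathlib

section
/- With the setup of one-step mean-field propagation on a finite state space S: if μ, μ' are probability mass functions on S and π, π' are Markov policies, then d_TV(μ[T(π)], μ'[T(π')]) ≤ |S| · ( max_s d_TV(π(s), π'(s)) + d_TV(μ, μ') ). -/
open Finset

/-- One-step mean-field propagation bound:
d_TV(μ[T(π)], μ'[T(π')]) ≤ |S| (max_s d_TV(π(s), π'(s)) + d_TV(μ, μ')). -/
theorem one_step_propagation_bound
    {S A : Type*} [Fintype S] [Nonempty S] [Fintype A] [Nonempty A]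
    (T : S → A → S → ℝ) (μ μ' : S → ℝ) (π π' : S → A → ℝ)
    (hT0 : ∀ s a s', 0 ≤ T s a s') (hT1 : ∀ s a, ∑ s', T s a s' = 1)
    (hμ0 : ∀ s, 0 ≤ μ s) (hμ1 : ∑ s, μ s = 1)
    (hμ'0 : ∀ s, 0 ≤ μ' s) (hμ'1 : ∑ s, μ' s = 1)
    (hπ0 : ∀ s a, 0 ≤ π s a) (hπ1 : ∀ s, ∑ a, π s a = 1)
    (hπ'0 : ∀ s a, 0 ≤ π' s a) (hπ'1 : ∀ s, ∑ a, π' s a = 1) :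
    (1 / 2) * ∑ s', |(∑ s, μ s * ∑ a, T s a s' * π s a) -
        ∑ s, μ' s * ∑ a, T s a s' * π' s a| ≤
      (Fintype.card S : ℝ) *
        ((univ.sup' univ_nonempty fun s => (1 / 2) * ∑ a, |π s a - π' s a|) +
          (1 / 2) * ∑ s, |μ s - μ' s|) := by
  set E : ℝ := univ.sup' univ_nonempty fun s => (1 / 2) * ∑ a, |π s a - π' s a| with hE
  have hEs : ∀ s : S, (1 / 2) * ∑ a, |π s a - π' s a| ≤ E := fun s => by
    exact le_sup' (fun s => (1 / 2) * ∑ a, |π s a - π' s a|) (mem_univ s)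
  have hE0 : 0 ≤ E := le_trans (by positivity) (hEs (Classical.arbitrary S))
  have hd0 : (0:ℝ) ≤ (1 / 2) * ∑ s, |μ s - μ' s| := by positivity
  have key : (1 / 2) * ∑ s', |(∑ s, μ s * ∑ a, T s a s' * π s a) -
      ∑ s, μ' s * ∑ a, T s a s' * π' s a| ≤ E + (1 / 2) * ∑ s, |μ s - μ' s| := by
    have h1 : ∀ s', |(∑ s, μ s * ∑ a, T s a s' * π s a) -
        ∑ s, μ' s * ∑ a, T s a s' * π' s a|
        ≤ ∑ s, ∑ a, T s a s' * |μ s * π s a - μ' s * π' s a| := by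
      intro s'
      have heq : (∑ s, μ s * ∑ a, T s a s' * π s a) -
          ∑ s, μ' s * ∑ a, T s a s' * π' s a
          = ∑ s, ∑ a, T s a s' * (μ s * π s a - μ' s * π' s a) := by
        rw [← Finset.sum_sub_distrib]
        refine Finset.sum_congr rfl fun s _ => ?_
        rw [Finset.mul_sum, Finset.mul_sum, ← Finset.sum_sub_distrib]
        exact Finset.sum_congr rfl fun a _ => by ring
      rw [heq]
      refine le_trans (Finset.abs_sum_le_sum_abs _ _) ?_
      refine Finset.sum_le_sum fun s _ => ?_
      refine le_trans (Finset.abs_sum_le_sum_abs _ _) ?_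
      refine Finset.sum_le_sum fun a _ => ?_
      rw [abs_mul, abs_of_nonneg (hT0 s a s')]
    have h2 : ∑ s' : S, ∑ s, ∑ a, T s a s' * |μ s * π s a - μ' s * π' s a|
        = ∑ s, ∑ a, |μ s * π s a - μ' s * π' s a| := by
      rw [Finset.sum_comm]
      refine Finset.sum_congr rfl fun s _ => ?_
      rw [Finset.sum_comm]
      refine Finset.sum_congr rfl fun a _ => ?_
      rw [← Finset.sum_mul, hT1, one_mul]
    have h3 : ∀ s, ∑ a, |μ s * π s a - μ' s * π' s a|
        ≤ μ s * ∑ a, |π s a - π' s a| + |μ s - μ' s| := by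
      intro s
      calc ∑ a, |μ s * π s a - μ' s * π' s a|
          ≤ ∑ a, (μ s * |π s a - π' s a| + |μ s - μ' s| * π' s a) := by
            refine Finset.sum_le_sum fun a _ => ?_
            have h : μ s * π s a - μ' s * π' s a
                = μ s * (π s a - π' s a) + (μ s - μ' s) * π' s a := by ring
            rw [h]
            refine le_trans (abs_add_le _ _) ?_
            rw [abs_mul, abs_mul, abs_of_nonneg (hμ0 s), abs_of_nonneg (hπ'0 s a)]
        _ = μ s * ∑ a, |π s a - π' s a| + |μ s - μ' s| := by
            rw [Finset.sum_add_distrib, ← Finset.mul_sum, ← Finset.mul_sum, hπ'1, mul_one]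
    calc (1 / 2) * ∑ s', |(∑ s, μ s * ∑ a, T s a s' * π s a) -
          ∑ s, μ' s * ∑ a, T s a s' * π' s a|
        ≤ (1 / 2) * ∑ s', ∑ s, ∑ a, T s a s' * |μ s * π s a - μ' s * π' s a| := by
          have := Finset.sum_le_sum (fun s' (_ : s' ∈ (univ : Finset S)) => h1 s')
          linarith
      _ = (1 / 2) * ∑ s, ∑ a, |μ s * π s a - μ' s * π' s a| := by rw [h2]
      _ ≤ (1 / 2) * ∑ s, (μ s * ∑ a, |π s a - π' s a| + |μ s - μ' s|) := by
          have := Finset.sum_le_sum (fun s (_ : s ∈ (univ : Finset S)) => h3 s)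
          linarith
      _ = (∑ s, μ s * ((1 / 2) * ∑ a, |π s a - π' s a|)) + (1 / 2) * ∑ s, |μ s - μ' s| := by
          rw [Finset.sum_add_distrib, mul_add, Finset.mul_sum]
          congr 1
          exact Finset.sum_congr rfl fun s _ => by ring
      _ ≤ (∑ s, μ s * E) + (1 / 2) * ∑ s, |μ s - μ' s| := by
          gcongr with s
          · exact hμ0 s
          · exact hEs s
      _ = E + (1 / 2) * ∑ s, |μ s - μ' s| := by
          rw [← Finset.sum_mul, hμ1, one_mul]
  have hcard : (1:ℝ) ≤ (Fintype.card S : ℝ) := by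
    exact_mod_cast Fintype.card_pos
  nlinarith [key, add_nonneg hE0 hd0]
end

section
/- The mean-field propagation operator B_prop mapping a time-varying policy π = {π_t}_{t=0}^{H} to the mean-field flow μ = {μ_t}_{t=0}^{H} (with fixed initial distribution μ_0 and μ_{t+1} = μ_t[T(π_t)]) is Lipschitz from the policy space with metric d_Π(π,π') = max_{t≤H} max_s d_TV(π_t(s), π'_t(s)) to the flow space with metric d_M(μ,μ') = max_{t≤H} d_TV(μ_t, μ'_t), with Lipschitz constant K_prop = |S|(|S|^H − 1)/(|S| − 1). -/
open Finset

/-- The mean-field propagation operator B_prop (fixed initial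
distribution, μ_{t+1} = μ_t[T(π_t)]) is Lipschitz from policies with metric
d_Π = max_{t≤H} max_s d_TV(π_t(s), π'_t(s)) to flows with metric
d_M = max_{t≤H} d_TV(μ_t, μ'_t), with constant |S|(|S|^H − 1)/(|S| − 1). -/
theorem B_prop_lipschitz
    {S A : Type*} [Fintype S] [Nonempty S] [Fintype A] [Nonempty A]
    (hS : 2 ≤ Fintype.card S) (H : ℕ)
    (T : S → A → S → ℝ) (μ0 : S → ℝ) (μ μ' : ℕ → S → ℝ) (π π' : ℕ → S → A → ℝ)
    (hT0 : ∀ s a s', 0 ≤ T s a s') (hT1 : ∀ s a, ∑ s', T s a s' = 1)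
    (hμ00 : ∀ s, 0 ≤ μ0 s) (hμ01 : ∑ s, μ0 s = 1)
    (hπ0 : ∀ t s a, 0 ≤ π t s a) (hπ1 : ∀ t s, ∑ a, π t s a = 1)
    (hπ'0 : ∀ t s a, 0 ≤ π' t s a) (hπ'1 : ∀ t s, ∑ a, π' t s a = 1)
    (hinit : μ 0 = μ0) (hinit' : μ' 0 = μ0)
    (hrec : ∀ t s', μ (t + 1) s' = ∑ s, μ t s * ∑ a, T s a s' * π t s a)
    (hrec' : ∀ t s', μ' (t + 1) s' = ∑ s, μ' t s * ∑ a, T s a s' * π' t s a) :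
    ((Finset.range (H + 1)).sup' (by simp) fun t =>
        (1 / 2) * ∑ s, |μ t s - μ' t s|) ≤
      ((Fintype.card S : ℝ) * ((Fintype.card S : ℝ) ^ H - 1) /
          ((Fintype.card S : ℝ) - 1)) *
        ((Finset.range (H + 1)).sup' (by simp) fun t =>
          univ.sup' univ_nonempty fun s => (1 / 2) * ∑ a, |π t s a - π' t s a|) := by
  classical
  set c : ℝ := (Fintype.card S : ℝ) with hc
  have hc2 : (2:ℝ) ≤ c := by rw [hc]; exact_mod_cast hS
  set d : ℝ := ((Finset.range (H + 1)).sup' (by simp) fun t =>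
      univ.sup' univ_nonempty fun s => (1 / 2) * ∑ a, |π t s a - π' t s a|) with hd
  -- per-time, per-state bound by d
  have hdb : ∀ t, t ≤ H → ∀ s : S, (1 / 2) * ∑ a, |π t s a - π' t s a| ≤ d := by
    intro t ht s
    have h1 : (1 / 2) * ∑ a, |π t s a - π' t s a| ≤
        univ.sup' univ_nonempty fun s => (1 / 2) * ∑ a, |π t s a - π' t s a| :=
      Finset.le_sup' (fun s => (1 / 2) * ∑ a, |π t s a - π' t s a|) (Finset.mem_univ s)
    exact h1.trans (Finset.le_sup'
      (fun t => univ.sup' univ_nonempty fun s => (1 / 2) * ∑ a, |π t s a - π' t s a|)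
      (Finset.mem_range.mpr (Nat.lt_succ_of_le ht)))
  have hd0 : 0 ≤ d := by
    refine le_trans ?_ (hdb 0 (Nat.zero_le _) (Classical.arbitrary S))
    positivity
  -- μ' is a probability distribution at each time
  have hμ' : ∀ t, (∀ s, 0 ≤ μ' t s) ∧ ∑ s, μ' t s = 1 := by
    intro t
    induction t with
    | zero => rw [hinit']; exact ⟨hμ00, hμ01⟩
    | succ t ih =>
      constructor
      · intro s'
        rw [hrec']
        refine Finset.sum_nonneg fun s _ => mul_nonneg (ih.1 s) ?_
        exact Finset.sum_nonneg fun a _ => mul_nonneg (hT0 s a s') (hπ'0 t s a)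
      · simp only [hrec']
        rw [Finset.sum_comm]
        have key : ∀ s : S, ∑ s', μ' t s * ∑ a, T s a s' * π' t s a = μ' t s := by
          intro s
          rw [← Finset.mul_sum, Finset.sum_comm]
          have : ∀ a : A, ∑ s', T s a s' * π' t s a = π' t s a := by
            intro a
            rw [← Finset.sum_mul, hT1, one_mul]
          simp only [this, hπ'1, mul_one]
        simp only [key, ih.2]
  -- row sums of the π-kernel
  have hrow : ∀ t (s : S), ∑ s', ∑ a, T s a s' * π t s a = 1 := by
    intro t s
    rw [Finset.sum_comm]
    have : ∀ a : A, ∑ s', T s a s' * π t s a = π t s a := by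
      intro a; rw [← Finset.sum_mul, hT1, one_mul]
    simp only [this, hπ1]
  -- main induction: D t ≤ t * d
  have main : ∀ t, t ≤ H → (1 / 2) * ∑ s, |μ t s - μ' t s| ≤ (t : ℝ) * d := by
    intro t
    induction t with
    | zero => intro _; simp [hinit, hinit']
    | succ t ih =>
      intro ht
      have ht' : t ≤ H := Nat.le_of_succ_le ht
      have ihb := ih ht'
      have step : (1 / 2) * ∑ s', |μ (t+1) s' - μ' (t+1) s'| ≤
          (1 / 2) * ∑ s, |μ t s - μ' t s| + d := by
        have hpt : ∀ s' : S, |μ (t+1) s' - μ' (t+1) s'| ≤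
            ∑ s, |μ t s - μ' t s| * (∑ a, T s a s' * π t s a)
            + ∑ s, μ' t s * ∑ a, T s a s' * |π t s a - π' t s a| := by
          intro s'
          rw [hrec, hrec', ← Finset.sum_sub_distrib]
          refine le_trans (Finset.abs_sum_le_sum_abs _ _) ?_
          rw [← Finset.sum_add_distrib]
          refine Finset.sum_le_sum fun s _ => ?_
          have hrw : μ t s * (∑ a, T s a s' * π t s a) - μ' t s * (∑ a, T s a s' * π' t s a)
              = (μ t s - μ' t s) * (∑ a, T s a s' * π t s a)
                + μ' t s * (∑ a, T s a s' * (π t s a - π' t s a)) := by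
            rw [Finset.mul_sum, Finset.mul_sum, Finset.mul_sum, Finset.mul_sum,
              ← Finset.sum_add_distrib, ← Finset.sum_sub_distrib]
            refine Finset.sum_congr rfl fun a _ => by ring
          rw [hrw]
          refine le_trans (abs_add_le _ _) (add_le_add ?_ ?_)
          · rw [abs_mul, abs_of_nonneg
              (Finset.sum_nonneg fun a _ => mul_nonneg (hT0 s a s') (hπ0 t s a))]
          · rw [abs_mul, abs_of_nonneg ((hμ' t).1 s)]
            refine mul_le_mul_of_nonneg_left ?_ ((hμ' t).1 s)
            refine le_trans (Finset.abs_sum_le_sum_abs _ _) ?_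
            refine Finset.sum_le_sum fun a _ => ?_
            rw [abs_mul, abs_of_nonneg (hT0 s a s')]
        have hsum : ∑ s', |μ (t+1) s' - μ' (t+1) s'| ≤
            ∑ s, |μ t s - μ' t s| + ∑ s, μ' t s * ∑ a, |π t s a - π' t s a| := by
          refine le_trans (Finset.sum_le_sum fun s' _ => hpt s') ?_
          rw [Finset.sum_add_distrib]
          refine add_le_add (le_of_eq ?_) (le_of_eq ?_)
          · rw [Finset.sum_comm]
            refine Finset.sum_congr rfl fun s _ => ?_
            rw [← Finset.mul_sum, hrow, mul_one]
          · rw [Finset.sum_comm]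
            refine Finset.sum_congr rfl fun s _ => ?_
            rw [← Finset.mul_sum]
            congr 1
            rw [Finset.sum_comm]
            refine Finset.sum_congr rfl fun a _ => ?_
            rw [← Finset.sum_mul, hT1, one_mul]
        have h2 : (1/2) * ∑ s, μ' t s * ∑ a, |π t s a - π' t s a| ≤ d := by
          have : ∀ s : S, μ' t s * ((1/2) * ∑ a, |π t s a - π' t s a|) ≤ μ' t s * d :=
            fun s => mul_le_mul_of_nonneg_left (hdb t ht' s) ((hμ' t).1 s)
          calc (1/2) * ∑ s, μ' t s * ∑ a, |π t s a - π' t s a|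
              = ∑ s, μ' t s * ((1/2) * ∑ a, |π t s a - π' t s a|) := by
                rw [Finset.mul_sum]; exact Finset.sum_congr rfl fun s _ => by ring
            _ ≤ ∑ s, μ' t s * d := Finset.sum_le_sum fun s _ => this s
            _ = d := by rw [← Finset.sum_mul, (hμ' t).2, one_mul]
        calc (1 / 2) * ∑ s', |μ (t+1) s' - μ' (t+1) s'|
            ≤ (1/2) * (∑ s, |μ t s - μ' t s| + ∑ s, μ' t s * ∑ a, |π t s a - π' t s a|) := by
              refine mul_le_mul_of_nonneg_left hsum (by norm_num)
          _ = (1/2) * ∑ s, |μ t s - μ' t s|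
              + (1/2) * ∑ s, μ' t s * ∑ a, |π t s a - π' t s a| := by ring
          _ ≤ (1/2) * ∑ s, |μ t s - μ' t s| + d := by linarith [h2]
      calc (1 / 2) * ∑ s, |μ (t+1) s - μ' (t+1) s|
          ≤ (1 / 2) * ∑ s, |μ t s - μ' t s| + d := step
        _ ≤ (t : ℝ) * d + d := by linarith [ihb]
        _ = ((t + 1 : ℕ) : ℝ) * d := by push_cast; ring
  -- H ≤ K
  have hK : (H : ℝ) ≤ c * (c ^ H - 1) / (c - 1) := by
    have hc1 : c ≠ 1 := by linarith
    have hgeom : ∑ k ∈ Finset.range H, c ^ k = (c ^ H - 1) / (c - 1) := by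
      rw [geom_sum_eq hc1]
    have h1 : (H : ℝ) ≤ ∑ k ∈ Finset.range H, c ^ k := by
      calc (H : ℝ) = ∑ k ∈ Finset.range H, (1:ℝ) := by simp
        _ ≤ ∑ k ∈ Finset.range H, c ^ k :=
          Finset.sum_le_sum fun k _ => one_le_pow₀ (by linarith)
    have h2 : ∑ k ∈ Finset.range H, c ^ k ≤ c * ∑ k ∈ Finset.range H, c ^ k := by
      nlinarith [Finset.sum_nonneg (fun k (_ : k ∈ Finset.range H) =>
        pow_nonneg (by linarith : (0:ℝ) ≤ c) k)]
    calc (H : ℝ) ≤ ∑ k ∈ Finset.range H, c ^ k := h1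
      _ ≤ c * ∑ k ∈ Finset.range H, c ^ k := h2
      _ = c * (c ^ H - 1) / (c - 1) := by rw [hgeom]; ring
  refine Finset.sup'_le _ _ fun t ht => ?_
  have ht' : t ≤ H := Nat.lt_succ_iff.mp (Finset.mem_range.mp ht)
  calc (1 / 2) * ∑ s, |μ t s - μ' t s| ≤ (t : ℝ) * d := main t ht'
    _ ≤ (H : ℝ) * d := mul_le_mul_of_nonneg_right (by exact_mod_cast ht') hd0
    _ ≤ c * (c ^ H - 1) / (c - 1) * d := mul_le_mul_of_nonneg_right hK hd0
end
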